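/- arXiv:1608.05311 — 4 statements merged into one kernel-verified Lean document; each statement's English description precedes it below -/
import Mathlib

section
/- For each fixed positive integer n, as m → ∞, the sum ∑_{k=1}^{m} (-1)^{k-1} * binomial(m, k) * k^{-n} is asymptotic to (log m)^n / n!; that is, the ratio tends to 1. -/
/-!
Write `S n m` for the sum. Pascal's rule and the absorption identity
`k * C(m + 1, k) = (m + 1) * C(m, k - 1)` give the recursion
`S (n + 1) (m + 1) = S (n + 1) m + S n (m + 1) / (m + 1)`, with `S 0 m = 1` for `m ≥ 1`.
This is a discrete form of `d/dH (H ^ (n + 1) / (n + 1)!) = H ^ n / n!` along the harmonic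
numbers `H_m`, whose increments are exactly `1 / (m + 1)`. The two mean-value bounds for
`x ↦ x ^ (n + 1)` then give by induction `H_m ^ n / n! ≤ S n m ≤ (H_m + n) ^ n / n!`, and
`log m ≤ H_m ≤ 1 + log m` squeezes the ratio to `1`.
-/

open Finset Filter

section PowSubPow

variable {R : Type*} [CommRing R] [PartialOrder R] [IsOrderedRing R] {a b : R}

lemma pow_succ_sub_pow_succ_le (hb : 0 ≤ b) (hab : b ≤ a) (n : ℕ) :
    a ^ (n + 1) - b ^ (n + 1) ≤ (n + 1) * a ^ n * (a - b) := by
  rw [← geom_sum₂_mul]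
  gcongr
  calc ∑ i ∈ range (n + 1), a ^ i * b ^ (n + 1 - 1 - i)
      ≤ ∑ _i ∈ range (n + 1), a ^ n := by
        refine sum_le_sum fun i hi => ?_
        have hin : i ≤ n := Nat.lt_succ_iff.mp (mem_range.mp hi)
        calc a ^ i * b ^ (n + 1 - 1 - i) ≤ a ^ i * a ^ (n - i) := by
              rw [Nat.add_sub_cancel]
              exact mul_le_mul_of_nonneg_left (pow_le_pow_left₀ hb hab _)
                (pow_nonneg (hb.trans hab) _)
          _ = a ^ n := by rw [← pow_add, Nat.add_sub_cancel' hin]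
    _ = (n + 1) * a ^ n := by simp [nsmul_eq_mul]

lemma le_pow_succ_sub_pow_succ (hb : 0 ≤ b) (hab : b ≤ a) (n : ℕ) :
    (n + 1) * b ^ n * (a - b) ≤ a ^ (n + 1) - b ^ (n + 1) := by
  rw [← geom_sum₂_mul]
  gcongr
  calc (n + 1) * b ^ n = ∑ _i ∈ range (n + 1), b ^ n := by simp [nsmul_eq_mul]
    _ ≤ ∑ i ∈ range (n + 1), a ^ i * b ^ (n + 1 - 1 - i) := by
        refine sum_le_sum fun i hi => ?_
        have hin : i ≤ n := Nat.lt_succ_iff.mp (mem_range.mp hi)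
        calc b ^ n = b ^ i * b ^ (n - i) := by rw [← pow_add, Nat.add_sub_cancel' hin]
          _ ≤ a ^ i * b ^ (n + 1 - 1 - i) := by rw [Nat.add_sub_cancel]; gcongr

end PowSubPow

section Taylor

variable {K : Type*} [Field K] [LinearOrder K] [IsStrictOrderedRing K] {a b : K}

lemma pow_succ_div_factorial_le (hb : 0 ≤ b) (hab : b ≤ a) (n : ℕ) :
    a ^ (n + 1) / (n + 1).factorial ≤
      b ^ (n + 1) / (n + 1).factorial + a ^ n / n.factorial * (a - b) := by
  have key := pow_succ_sub_pow_succ_le hb hab n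
  rw [Nat.factorial_succ, Nat.cast_mul, Nat.cast_succ]
  rw [← sub_le_iff_le_add', ← sub_div, div_le_iff₀ (by positivity)]
  calc a ^ (n + 1) - b ^ (n + 1) ≤ (n + 1) * a ^ n * (a - b) := key
    _ = _ := by field_simp

lemma le_pow_succ_div_factorial (hb : 0 ≤ b) (hab : b ≤ a) (n : ℕ) :
    b ^ (n + 1) / (n + 1).factorial + b ^ n / n.factorial * (a - b) ≤
      a ^ (n + 1) / (n + 1).factorial := by
  have key := le_pow_succ_sub_pow_succ hb hab n
  rw [Nat.factorial_succ, Nat.cast_mul, Nat.cast_succ]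
  rw [← le_sub_iff_add_le', ← sub_div, le_div_iff₀ (by positivity)]
  calc _ = (n + 1) * b ^ n * (a - b) := by field_simp
    _ ≤ a ^ (n + 1) - b ^ (n + 1) := key

end Taylor

noncomputable def alternatingBinomialSum (n m : ℕ) : ℝ :=
  ∑ k ∈ Icc 1 m, (-1 : ℝ) ^ (k - 1) * (m.choose k : ℝ) / (k : ℝ) ^ n

lemma alternatingBinomialSum_eq_sum_range (n m : ℕ) :
    alternatingBinomialSum n m =
      ∑ i ∈ range m, (-1 : ℝ) ^ i * (m.choose (i + 1) : ℝ) / ((i : ℝ) + 1) ^ n := by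
  rw [alternatingBinomialSum, ← Ico_add_one_right_eq_Icc, sum_Ico_eq_sum_range]
  simp [add_comm]

@[simp]
lemma alternatingBinomialSum_zero_right (n : ℕ) : alternatingBinomialSum n 0 = 0 := by
  simp [alternatingBinomialSum]

lemma alternatingBinomialSum_zero_succ (m : ℕ) : alternatingBinomialSum 0 (m + 1) = 1 := by
  have h : ∑ i ∈ range (m + 2), (-1 : ℝ) ^ i * ((m + 1).choose i : ℝ) = 0 := by
    exact_mod_cast Int.alternating_sum_range_choose_of_ne m.succ_ne_zero
  rw [sum_range_succ'] at h
  simp only [pow_succ, mul_neg_one, neg_mul, sum_neg_distrib, pow_zero, Nat.choose_zero_right,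
    Nat.cast_one, one_mul] at h
  rw [alternatingBinomialSum_eq_sum_range]
  simp only [pow_zero, div_one]
  linarith

lemma alternatingBinomialSum_succ_succ (n m : ℕ) :
    alternatingBinomialSum (n + 1) (m + 1) =
      alternatingBinomialSum (n + 1) m + alternatingBinomialSum n (m + 1) / (m + 1) := by
  have vanishing_top :
      ∑ i ∈ range m, (-1 : ℝ) ^ i * (m.choose (i + 1) : ℝ) / ((i : ℝ) + 1) ^ (n + 1) =
        ∑ i ∈ range (m + 1),
          (-1 : ℝ) ^ i * (m.choose (i + 1) : ℝ) / ((i : ℝ) + 1) ^ (n + 1) := by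
    simp [sum_range_succ _ m]
  simp only [alternatingBinomialSum_eq_sum_range, sum_div]
  rw [vanishing_top, ← sum_add_distrib]
  refine sum_congr rfl fun i _ => ?_
  have absorb : ((m : ℝ) + 1) * m.choose i = (m + 1).choose (i + 1) * ((i : ℝ) + 1) := by
    exact_mod_cast Nat.add_one_mul_choose_eq m i
  have pascal : ((m + 1).choose (i + 1) : ℝ) = m.choose i + m.choose (i + 1) := by
    exact_mod_cast Nat.choose_succ_succ' m i
  field_simp
  linear_combination ((i : ℝ) + 1) ^ n * (((m : ℝ) + 1) * pascal + absorb)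

lemma cast_harmonic_succ_sub (m : ℕ) :
    (harmonic (m + 1) : ℝ) - harmonic m = ((m : ℝ) + 1)⁻¹ := by
  simp [harmonic_succ]

lemma cast_harmonic_nonneg (m : ℕ) : 0 ≤ (harmonic m : ℝ) :=
  (Real.log_nonneg (by simp)).trans (log_add_one_le_harmonic m)

lemma harmonic_pow_div_factorial_le_alternatingBinomialSum (n m : ℕ) :
    (harmonic (m + 1) : ℝ) ^ n / n.factorial ≤ alternatingBinomialSum n (m + 1) := by
  induction n generalizing m with
  | zero => simp [alternatingBinomialSum_zero_succ]
  | succ n ih =>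
    suffices h : ∀ m, (harmonic m : ℝ) ^ (n + 1) / (n + 1).factorial ≤
        alternatingBinomialSum (n + 1) m from h (m + 1)
    intro m
    induction m with
    | zero => simp
    | succ m ihm =>
      have hdiff := cast_harmonic_succ_sub m
      have hmono : (harmonic m : ℝ) ≤ harmonic (m + 1) :=
        sub_nonneg.mp (by rw [hdiff]; positivity)
      calc (harmonic (m + 1) : ℝ) ^ (n + 1) / (n + 1).factorial
          ≤ (harmonic m : ℝ) ^ (n + 1) / (n + 1).factorial +
              (harmonic (m + 1) : ℝ) ^ n / n.factorial * (harmonic (m + 1) - harmonic m) :=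
            pow_succ_div_factorial_le (cast_harmonic_nonneg m) hmono n
        _ ≤ alternatingBinomialSum (n + 1) m + alternatingBinomialSum n (m + 1) / (m + 1) := by
            rw [hdiff, ← div_eq_mul_inv]
            gcongr
            exact ih m
        _ = alternatingBinomialSum (n + 1) (m + 1) := (alternatingBinomialSum_succ_succ n m).symm

lemma alternatingBinomialSum_le_harmonic_add_pow_div_factorial (n m : ℕ) :
    alternatingBinomialSum n m ≤ (harmonic m + n : ℝ) ^ n / n.factorial := by
  induction n generalizing m with
  | zero => cases m <;> simp [alternatingBinomialSum_zero_succ]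
  | succ n ih =>
    induction m with
    | zero => simp; positivity
    | succ m ihm =>
      have hH₀ := cast_harmonic_nonneg m
      have hH₁ := cast_harmonic_nonneg (m + 1)
      have hdiff :
          (harmonic (m + 1) + (n + 1) : ℝ) - (harmonic m + (n + 1)) = ((m : ℝ) + 1)⁻¹ := by
        rw [add_sub_add_right_eq_sub, cast_harmonic_succ_sub]
      have hinv : 0 < ((m : ℝ) + 1)⁻¹ := by positivity
      have hinv_le_one : ((m : ℝ) + 1)⁻¹ ≤ 1 := inv_le_one_of_one_le₀ (by simp)
      push_cast at ihm ⊢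
      calc alternatingBinomialSum (n + 1) (m + 1)
          = alternatingBinomialSum (n + 1) m +
              alternatingBinomialSum n (m + 1) * ((m : ℝ) + 1)⁻¹ := by
            rw [alternatingBinomialSum_succ_succ, div_eq_mul_inv]
        _ ≤ ((harmonic m : ℝ) + (n + 1)) ^ (n + 1) / (n + 1).factorial +
              ((harmonic m : ℝ) + (n + 1)) ^ n / n.factorial * ((m : ℝ) + 1)⁻¹ := by
            refine add_le_add ihm (mul_le_mul_of_nonneg_right ((ih (m + 1)).trans ?_) hinv.le)
            exact div_le_div_of_nonneg_right
              (pow_le_pow_left₀ (by positivity) (by linarith) n) (by positivity)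
        _ ≤ ((harmonic (m + 1) : ℝ) + (n + 1)) ^ (n + 1) / (n + 1).factorial := by
            rw [← hdiff]
            exact le_pow_succ_div_factorial (by positivity) (by linarith) n

lemma log_pow_div_factorial_le_alternatingBinomialSum (n : ℕ) {m : ℕ} (hm : 1 ≤ m) :
    Real.log m ^ n / n.factorial ≤ alternatingBinomialSum n m := by
  obtain ⟨m, rfl⟩ := Nat.exists_eq_add_of_le' hm
  refine le_trans ?_ (harmonic_pow_div_factorial_le_alternatingBinomialSum n m)
  have hlog : Real.log (m + 1 : ℕ) ≤ harmonic (m + 1) :=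
    (Real.log_le_log (by positivity) (by gcongr; omega)).trans (log_add_one_le_harmonic (m + 1))
  gcongr

lemma alternatingBinomialSum_le_log_add_pow_div_factorial (n m : ℕ) :
    alternatingBinomialSum n m ≤ (Real.log m + (n + 1)) ^ n / n.factorial := by
  refine (alternatingBinomialSum_le_harmonic_add_pow_div_factorial n m).trans ?_
  have := harmonic_le_one_add_log m
  exact div_le_div_of_nonneg_right (pow_le_pow_left₀
    (add_nonneg (cast_harmonic_nonneg m) n.cast_nonneg) (by linarith) n) n.factorial.cast_nonneg

theorem alternating_binomial_inverse_power_asymptotic_general (n : ℕ) :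
    Tendsto (fun m : ℕ =>
      (∑ k ∈ Icc 1 m, (-1 : ℝ) ^ (k - 1) * (m.choose k : ℝ) / (k : ℝ) ^ n) /
        ((Real.log m) ^ n / (n.factorial : ℝ))) atTop (nhds 1) := by
  have hlog : Tendsto (fun m : ℕ => Real.log m) atTop atTop :=
    Real.tendsto_log_atTop.comp tendsto_natCast_atTop_atTop
  have hupper : Tendsto (fun m : ℕ => (1 + (n + 1) / Real.log m) ^ n) atTop (nhds 1) := by
    simpa using ((hlog.const_div_atTop ((n : ℝ) + 1)).const_add 1).pow n
  refine tendsto_of_tendsto_of_tendsto_of_le_of_le' tendsto_const_nhds hupper ?_ ?_ <;>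
    filter_upwards [eventually_gt_atTop 1] with m hm <;>
    have hL : 0 < Real.log m := Real.log_pos (by exact_mod_cast hm)
  · rw [le_div_iff₀ (by positivity), one_mul]
    exact log_pow_div_factorial_le_alternatingBinomialSum n hm.le
  · rw [div_le_iff₀ (by positivity)]
    calc alternatingBinomialSum n m ≤ (Real.log m + (n + 1)) ^ n / n.factorial :=
          alternatingBinomialSum_le_log_add_pow_div_factorial n m
      _ = (1 + (n + 1) / Real.log m) ^ n * (Real.log m ^ n / n.factorial) := by
          rw [one_add_div hL.ne', div_pow, div_mul_div_cancel₀ (by positivity)]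

theorem alternating_binomial_inverse_power_asymptotic (n : ℕ) (hn : 1 ≤ n) :
    Tendsto (fun m : ℕ =>
      (∑ k ∈ Icc 1 m, (-1 : ℝ) ^ (k - 1) * (m.choose k : ℝ) / (k : ℝ) ^ n) /
        ((Real.log m) ^ n / (n.factorial : ℝ))) atTop (nhds 1) :=
  alternating_binomial_inverse_power_asymptotic_general n
end

section
/- For every positive integer m, ∑_{k=1}^{m} (-1)^{k-1} * binomial(m, k) * (1/k^2) = H_m^{(2)}/2 + (H_m^{(1)})^2/2, where H_m^{(n)} = ∑_{k=1}^{m} 1/k^n. -/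
/-!
Write `S_r(n) = ∑_{k=1}^n (-1)^(k-1) C(n,k) / k^r`. Pascal's rule `C(n+1,k) = C(n,k) + C(n,k-1)`
and the absorption identity `C(n,k-1) / k = C(n+1,k) / (n+1)` give the recurrence
`S_{r+1}(n+1) = S_{r+1}(n) + S_r(n+1) / (n+1)`, while `S_0(n+1) = 1`. Hence `S_1(n) = H_n` and
`S_2(n) = ∑_{j ≤ n} H_j / j`, which telescopes to `(H_n^{(2)} + H_n^2) / 2`.
-/

open Finset

theorem sum_Icc_one_eq_sum_range {M : Type*} [AddCommMonoid M] (f : ℕ → M) (n : ℕ) :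
    ∑ k ∈ Icc 1 n, f k = ∑ i ∈ range n, f (i + 1) := by
  rw [range_eq_Ico, sum_Ico_add', ← Ico_add_one_right_eq_Icc, zero_add]

section

variable (K : Type*) [Field K]

def genHarmonic (r n : ℕ) : K :=
  ∑ i ∈ range n, 1 / ((i : K) + 1) ^ r

/-- `S_r(n)`, with summation index `i = k - 1`. -/
def altChooseSum (r n : ℕ) : K :=
  ∑ i ∈ range n, (-1) ^ i * (n.choose (i + 1) : K) / ((i : K) + 1) ^ r

variable {K}

theorem genHarmonic_succ (r n : ℕ) :
    genHarmonic K r (n + 1) = genHarmonic K r n + 1 / ((n : K) + 1) ^ r :=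
  sum_range_succ _ _

variable [CharZero K]

theorem choose_div_add_one (n i : ℕ) :
    (n.choose i : K) / ((i : K) + 1) = ((n + 1).choose (i + 1) : K) / ((n : K) + 1) := by
  have h : ((n : K) + 1) * n.choose i = (n + 1).choose (i + 1) * ((i : K) + 1) := by
    exact_mod_cast Nat.add_one_mul_choose_eq n i
  field_simp
  linear_combination h

theorem altChooseSum_zero_succ (n : ℕ) : altChooseSum K 0 (n + 1) = 1 := by
  have h : ∑ i ∈ range (n + 2), (-1 : K) ^ i * ((n + 1).choose i : K) = 0 := by
    exact_mod_cast Int.alternating_sum_range_choose_of_ne n.succ_ne_zero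
  rw [sum_range_succ'] at h
  simp only [altChooseSum, pow_zero, div_one]
  simp only [pow_succ, mul_neg, mul_one, neg_mul, sum_neg_distrib, pow_zero,
    Nat.choose_zero_right, Nat.cast_one] at h
  linear_combination -h

theorem altChooseSum_succ_succ (r n : ℕ) :
    altChooseSum K (r + 1) (n + 1) =
      altChooseSum K (r + 1) n + altChooseSum K r (n + 1) / ((n : K) + 1) := by
  have pascal : altChooseSum K (r + 1) (n + 1) =
      ∑ i ∈ range (n + 1), (-1) ^ i * (n.choose i : K) / ((i : K) + 1) ^ (r + 1) +
        ∑ i ∈ range (n + 1), (-1) ^ i * (n.choose (i + 1) : K) / ((i : K) + 1) ^ (r + 1) := by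
    rw [altChooseSum, ← sum_add_distrib]
    refine sum_congr rfl fun i _ => ?_
    rw [Nat.choose_succ_succ, Nat.cast_add]
    ring
  have absorb : ∑ i ∈ range (n + 1), (-1) ^ i * (n.choose i : K) / ((i : K) + 1) ^ (r + 1) =
      altChooseSum K r (n + 1) / ((n : K) + 1) := by
    rw [altChooseSum, sum_div]
    refine sum_congr rfl fun i _ => ?_
    rw [pow_succ', ← div_div, mul_div_assoc, choose_div_add_one]
    ring
  have drop_top :
      ∑ i ∈ range (n + 1), (-1) ^ i * (n.choose (i + 1) : K) / ((i : K) + 1) ^ (r + 1) =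
        altChooseSum K (r + 1) n := by
    rw [sum_range_succ, Nat.choose_succ_self, Nat.cast_zero, mul_zero, zero_div, add_zero]
    rfl
  rw [pascal, absorb, drop_top, add_comm]

theorem altChooseSum_one (n : ℕ) : altChooseSum K 1 n = genHarmonic K 1 n := by
  induction n with
  | zero => simp [altChooseSum, genHarmonic]
  | succ n ih => rw [altChooseSum_succ_succ, ih, altChooseSum_zero_succ, genHarmonic_succ, pow_one]

theorem altChooseSum_two (n : ℕ) :
    altChooseSum K 2 n = genHarmonic K 2 n / 2 + genHarmonic K 1 n ^ 2 / 2 := by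
  induction n with
  | zero => simp [altChooseSum, genHarmonic]
  | succ n ih =>
    rw [altChooseSum_succ_succ, ih, altChooseSum_one, genHarmonic_succ, genHarmonic_succ]
    field_simp
    ring

end

theorem alternating_binomial_harmonic_sq_general (m : ℕ) :
    ∑ k ∈ Icc 1 m, (-1 : ℝ) ^ (k - 1) * (m.choose k : ℝ) * (1 / (k : ℝ) ^ 2) =
      (∑ k ∈ Icc 1 m, (1 : ℝ) / (k : ℝ) ^ 2) / 2 +
        (∑ k ∈ Icc 1 m, (1 : ℝ) / (k : ℝ)) ^ 2 / 2 := by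
  have h := altChooseSum_two (K := ℝ) m
  simp only [altChooseSum, genHarmonic, pow_one] at h
  simp only [sum_Icc_one_eq_sum_range, Nat.add_sub_cancel, Nat.cast_add, Nat.cast_one]
  rw [← h]
  refine sum_congr rfl fun i _ => ?_
  ring

theorem alternating_binomial_harmonic_sq (m : ℕ) (hm : 1 ≤ m) :
    ∑ k ∈ Icc 1 m, (-1 : ℝ) ^ (k - 1) * (m.choose k : ℝ) * (1 / (k : ℝ) ^ 2) =
      (∑ k ∈ Icc 1 m, (1 : ℝ) / (k : ℝ) ^ 2) / 2 +
        (∑ k ∈ Icc 1 m, (1 : ℝ) / (k : ℝ)) ^ 2 / 2 :=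
  alternating_binomial_harmonic_sq_general m
end

section
/- For real λ > 0 and positive integer m, ∫_0^∞ (1 − e^{−λ u})^m du diverges, but for any n ≥ 1, ∫_0^∞ n u^{n-1} (1 − (1 − e^{−λ u})^m) du = (n!/λ^n) * ∑_{k=1}^{m} (-1)^{k-1} binomial(m,k) / k^n. -/
/-!
The integrand `(1 - e^{-λu})^m` tends to `1`, so it is not integrable on `(0, ∞)`. For the moments,
the binomial theorem writes `1 - (1 - e^{-λu})^m` as `∑_{k=1}^m (-1)^(k-1) (m choose k) e^{-kλu}`,
and each term contributes a Gamma integral `∫_0^∞ u^(n-1) e^{-kλu} du = (n-1)! / (kλ)^n`.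
-/

open Finset MeasureTheory Real Filter Topology

theorem not_integrableOn_Ioi_of_tendsto {E : Type*} [NormedAddCommGroup E] {f : ℝ → E} {c : E}
    (hc : c ≠ 0) (hf : Tendsto f atTop (𝓝 c)) (a : ℝ) : ¬ IntegrableOn f (Set.Ioi a) := by
  intro hint
  obtain ⟨b, hb⟩ := eventually_atTop.1 <|
    hf.norm.eventually (lt_mem_nhds (half_lt_self (norm_pos_iff.2 hc)))
  have hconst : IntegrableOn (fun _ ↦ ‖c‖ / 2) (Set.Ioi (max a b)) := by
    refine Integrable.mono' (hint.mono_set (Set.Ioi_subset_Ioi (le_max_left a b))).norm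
      aestronglyMeasurable_const ((ae_restrict_iff' measurableSet_Ioi).2 (ae_of_all _ ?_))
    intro x hx
    rw [norm_div, norm_norm, Real.norm_two]
    exact (hb x ((le_max_right a b).trans (le_of_lt hx))).le
  rw [integrableOn_const_iff, Real.volume_Ioi] at hconst
  simp [hc] at hconst

theorem one_sub_one_sub_pow {R : Type*} [CommRing R] (x : R) (m : ℕ) :
    1 - (1 - x) ^ m = ∑ k ∈ Icc 1 m, (-1) ^ (k - 1) * (m.choose k : R) * x ^ k := by
  rw [sub_eq_neg_add (1 : R) x, add_pow, range_eq_Ico, sum_eq_sum_Ico_succ_bot m.add_one_pos,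
    zero_add, Ico_add_one_right_eq_Icc, ← sub_sub]
  simp only [pow_zero, one_pow, Nat.choose_zero_right, Nat.cast_one, mul_one, sub_self, zero_sub,
    ← sum_neg_distrib]
  refine sum_congr rfl fun k hk ↦ ?_
  obtain ⟨j, rfl⟩ := Nat.exists_eq_add_of_le' (mem_Ico.1 hk).1
  rw [neg_pow, Nat.add_sub_cancel, pow_succ]
  ring

theorem integrableOn_pow_mul_exp_neg_mul (k : ℕ) {c : ℝ} (hc : 0 < c) :
    IntegrableOn (fun u : ℝ ↦ u ^ k * exp (-(c * u))) (Set.Ioi 0) := by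
  refine (integrableOn_rpow_mul_exp_neg_mul_rpow (s := k) (neg_one_lt_zero.trans_le k.cast_nonneg)
    one_pos hc).congr_fun (fun u _ ↦ ?_) measurableSet_Ioi
  simp only [rpow_natCast, rpow_one, neg_mul]

theorem integral_pow_mul_exp_neg_mul (k : ℕ) {c : ℝ} (hc : 0 < c) :
    ∫ u in Set.Ioi (0 : ℝ), u ^ k * exp (-(c * u)) = k.factorial / c ^ (k + 1) := by
  have hgamma := integral_rpow_mul_exp_neg_mul_rpow one_pos (q := k)
    (neg_one_lt_zero.trans_le k.cast_nonneg) hc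
  simp only [rpow_natCast, rpow_one, div_one, neg_mul] at hgamma
  rw [hgamma, Real.Gamma_nat_eq_factorial, rpow_neg hc.le, ← Nat.cast_add_one, rpow_natCast]
  ring

theorem integral_pow_mul_one_sub_one_sub_exp_pow (p m : ℕ) {lam : ℝ} (hlam : 0 < lam) :
    ∫ u in Set.Ioi (0 : ℝ), u ^ p * (1 - (1 - exp (-lam * u)) ^ m) =
      p.factorial / lam ^ (p + 1) *
        ∑ k ∈ Icc 1 m, (-1 : ℝ) ^ (k - 1) * (m.choose k : ℝ) / (k : ℝ) ^ (p + 1) := by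
  have hexpand : ∀ u : ℝ, u ^ p * (1 - (1 - exp (-lam * u)) ^ m) =
      ∑ k ∈ Icc 1 m, (-1) ^ (k - 1) * (m.choose k : ℝ) * (u ^ p * exp (-(k * lam * u))) := by
    intro u
    rw [one_sub_one_sub_pow, mul_sum]
    refine sum_congr rfl fun k _ ↦ ?_
    rw [← exp_nat_mul]
    ring_nf
  have hrate : ∀ k ∈ Icc 1 m, 0 < (k : ℝ) * lam := fun k hk ↦
    mul_pos (Nat.cast_pos.2 (mem_Icc.1 hk).1) hlam
  simp only [hexpand]
  rw [integral_finsetSum _ fun k hk ↦ (integrableOn_pow_mul_exp_neg_mul p (hrate k hk)).const_mul _,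
    mul_sum]
  refine sum_congr rfl fun k hk ↦ ?_
  rw [integral_const_mul, integral_pow_mul_exp_neg_mul p (hrate k hk)]
  ring

theorem moments_of_max_exponential_general (lam : ℝ) (hlam : 0 < lam) (m : ℕ) :
    ¬ IntegrableOn (fun u : ℝ => (1 - Real.exp (-lam * u)) ^ m) (Set.Ioi 0) volume ∧
    ∀ n : ℕ, 1 ≤ n →
      ∫ u in Set.Ioi (0 : ℝ),
          (n : ℝ) * u ^ (n - 1) * (1 - (1 - Real.exp (-lam * u)) ^ m) =
        (n.factorial : ℝ) / lam ^ n *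
          ∑ k ∈ Icc 1 m, (-1 : ℝ) ^ (k - 1) * (m.choose k : ℝ) / (k : ℝ) ^ n := by
  refine ⟨not_integrableOn_Ioi_of_tendsto one_ne_zero ?_ 0, fun n hn ↦ ?_⟩
  · simpa using ((tendsto_exp_atBot.comp
      (tendsto_id.const_mul_atTop_of_neg (neg_neg_of_pos hlam))).const_sub 1).pow m
  · obtain ⟨p, rfl⟩ := Nat.exists_eq_add_of_le' hn
    simp only [Nat.add_sub_cancel, mul_assoc]
    rw [integral_const_mul, integral_pow_mul_one_sub_one_sub_exp_pow p m hlam, Nat.factorial_succ]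
    push_cast
    ring

theorem moments_of_max_exponential (lam : ℝ) (hlam : 0 < lam) (m : ℕ) (hm : 1 ≤ m) :
    ¬ IntegrableOn (fun u : ℝ => (1 - Real.exp (-lam * u)) ^ m) (Set.Ioi 0) volume ∧
    ∀ n : ℕ, 1 ≤ n →
      ∫ u in Set.Ioi (0 : ℝ),
          (n : ℝ) * u ^ (n - 1) * (1 - (1 - Real.exp (-lam * u)) ^ m) =
        (n.factorial : ℝ) / lam ^ n *
          ∑ k ∈ Icc 1 m, (-1 : ℝ) ^ (k - 1) * (m.choose k : ℝ) / (k : ℝ) ^ n :=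
  moments_of_max_exponential_general lam hlam m
end

section
/- Fix z > 0, α ∈ ℝ, and set f(m) = (log m)/z. Then lim_{m→∞} ∫_0^∞ u^{α−1} e^{−u} (1 − e^{−f(m) u})^m du = Γ(α, z), the upper incomplete Gamma function ∫_z^∞ u^{α−1} e^{−u} du. -/
/-!
Write `t = exp (-(log m / z) * u) = m ^ (-u / z)`. Bernoulli and `1 - t ≤ exp (-t)` squeeze
`(1 - t) ^ m` between `1 - m t` and `exp (-m t)`, and `m t = m ^ (1 - u / z)`; hence the factor
tends to `0` for `u < z` and to `1` for `u > z`.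

Near `u = 0` the weight `u ^ (α - 1)` need not be integrable, so the domination must gain a
power `u ^ k` with `k > -α`: splitting off `k` factors with `1 - t ≤ (log m / z) u`, and using
`m t ≥ √m` on `u ≤ z / 2` for the other ones, gives
`(1 - t) ^ m ≤ (log m / z) ^ k e ^ k e ^ (-√m) u ^ k`, which is at most `u ^ k` for large `m`,
uniformly in `u`.
-/

open Filter MeasureTheory Real Set Topology

lemma one_sub_pow_le_exp_neg_mul {t : ℝ} (ht : t ≤ 1) (n : ℕ) :
    (1 - t) ^ n ≤ exp (-(n * t)) :=
  calc (1 - t) ^ n ≤ exp (-t) ^ n := pow_le_pow_left₀ (by linarith) (one_sub_le_exp_neg t) n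
    _ = exp (-(n * t)) := by rw [← exp_nat_mul, mul_neg]

lemma tendsto_one_sub_pow_of_tendsto_mul_atTop {t : ℕ → ℝ} (ht : ∀ n, t n ≤ 1)
    (h : Tendsto (fun n => n * t n) atTop atTop) :
    Tendsto (fun n => (1 - t n) ^ n) atTop (𝓝 0) :=
  tendsto_of_tendsto_of_tendsto_of_le_of_le tendsto_const_nhds
    (tendsto_exp_atBot.comp (tendsto_neg_atTop_atBot.comp h))
    (fun n => pow_nonneg (sub_nonneg.2 (ht n)) n) (fun n => one_sub_pow_le_exp_neg_mul (ht n) n)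

lemma tendsto_one_sub_pow_of_tendsto_mul_zero {t : ℕ → ℝ} (ht : ∀ n, t n ∈ Icc 0 1)
    (h : Tendsto (fun n => n * t n) atTop (𝓝 0)) :
    Tendsto (fun n => (1 - t n) ^ n) atTop (𝓝 1) := by
  refine tendsto_of_tendsto_of_tendsto_of_le_of_le (by simpa using h.const_sub 1)
    tendsto_const_nhds (fun n => ?_)
    fun n => pow_le_one₀ (sub_nonneg.2 (ht n).2) (by simp [(ht n).1])
  simpa [sub_eq_add_neg] using one_add_mul_le_pow (a := -t n) (by linarith [(ht n).2]) n

lemma one_sub_exp_neg_pow_le {x : ℝ} (hx : 0 ≤ x) {k m : ℕ} (hkm : k ≤ m) :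
    (1 - exp (-x)) ^ m ≤ x ^ k * exp k * exp (-(m * exp (-x))) := by
  have hexp : exp (-x) ≤ 1 := exp_le_one_iff.2 (neg_nonpos.2 hx)
  calc (1 - exp (-x)) ^ m = (1 - exp (-x)) ^ k * (1 - exp (-x)) ^ (m - k) := by
        rw [← pow_add, Nat.add_sub_cancel' hkm]
    _ ≤ x ^ k * exp (-((m - k : ℕ) * exp (-x))) := by
        gcongr
        · linarith [one_sub_le_exp_neg x]
        · exact one_sub_pow_le_exp_neg_mul hexp _
    _ ≤ x ^ k * (exp k * exp (-(m * exp (-x)))) := by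
        rw [← exp_add, Nat.cast_sub hkm]
        gcongr
        nlinarith [exp_pos (-x), (Nat.cast_nonneg k : (0 : ℝ) ≤ k)]
    _ = x ^ k * exp k * exp (-(m * exp (-x))) := by ring

lemma tendsto_log_pow_mul_exp_neg_sqrt (k : ℕ) :
    Tendsto (fun x => log x ^ k * exp (-√x)) atTop (𝓝 0) := by
  have hlim : Tendsto (fun x => 2 ^ k * (√x ^ k * exp (-√x))) atTop (𝓝 0) := by
    simpa using ((tendsto_pow_mul_exp_neg_atTop_nhds_zero k).comp
      tendsto_sqrt_atTop).const_mul (2 ^ k)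
  refine tendsto_of_tendsto_of_tendsto_of_le_of_le' tendsto_const_nhds hlim ?_ ?_ <;>
    filter_upwards [eventually_ge_atTop 1] with x hx
  · have := log_nonneg hx
    positivity
  · have hlog : log x ≤ 2 * √x := by
      have := log_le_self (sqrt_nonneg x)
      rw [log_sqrt (by linarith)] at this
      linarith
    calc log x ^ k * exp (-√x) ≤ (2 * √x) ^ k * exp (-√x) := by
          gcongr
          exact log_nonneg hx
      _ = 2 ^ k * (√x ^ k * exp (-√x)) := by ring

-- The CDF at `u` of the maximum of `m` independent exponential variables of rate `log m / z`.
noncomputable def maxExpCDF (z : ℝ) (m : ℕ) (u : ℝ) : ℝ := (1 - exp (-(log m / z) * u)) ^ m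

section maxExpCDF

variable {z u : ℝ}

lemma exp_neg_log_div_mul_mem_Icc (hz : 0 < z) (m : ℕ) (hu : 0 ≤ u) :
    exp (-(log m / z) * u) ∈ Icc 0 1 :=
  ⟨(exp_pos _).le, exp_le_one_iff.2 <| by
    rw [neg_mul, neg_nonpos]; exact mul_nonneg (div_nonneg (log_natCast_nonneg m) hz.le) hu⟩

lemma maxExpCDF_mem_Icc (hz : 0 < z) (m : ℕ) (hu : 0 ≤ u) : maxExpCDF z m u ∈ Icc 0 1 :=
  have ht := exp_neg_log_div_mul_mem_Icc hz m hu
  ⟨pow_nonneg (sub_nonneg.2 ht.2) m, pow_le_one₀ (sub_nonneg.2 ht.2) (by linarith [ht.1])⟩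

lemma mul_exp_neg_log_div_mul {x : ℝ} (hx : 0 < x) (z u : ℝ) :
    x * exp (-(log x / z) * u) = x ^ (1 - u / z) := by
  rw [rpow_def_of_pos hx]
  nth_rewrite 1 [← exp_log hx]
  rw [← exp_add]
  ring_nf

lemma tendsto_maxExpCDF_of_lt (hz : 0 < z) (hu : 0 ≤ u) (h : u < z) :
    Tendsto (fun m => maxExpCDF z m u) atTop (𝓝 0) := by
  refine tendsto_one_sub_pow_of_tendsto_mul_atTop
    (fun m => (exp_neg_log_div_mul_mem_Icc hz m hu).2) ?_
  have hexp : 0 < 1 - u / z := by rw [sub_pos, div_lt_one hz]; exact h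
  refine ((tendsto_rpow_atTop hexp).comp tendsto_natCast_atTop_atTop).congr' ?_
  filter_upwards [eventually_gt_atTop 0] with m hm
  exact (mul_exp_neg_log_div_mul (Nat.cast_pos.2 hm) z u).symm

lemma tendsto_maxExpCDF_of_gt (hz : 0 < z) (h : z < u) :
    Tendsto (fun m => maxExpCDF z m u) atTop (𝓝 1) := by
  refine tendsto_one_sub_pow_of_tendsto_mul_zero
    (fun m => exp_neg_log_div_mul_mem_Icc hz m (hz.trans h).le) ?_
  have hexp : 0 < u / z - 1 := by rw [sub_pos, one_lt_div hz]; exact h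
  have hlim := (tendsto_rpow_neg_atTop hexp).comp tendsto_natCast_atTop_atTop
  rw [neg_sub] at hlim
  refine hlim.congr' ?_
  filter_upwards [eventually_gt_atTop 0] with m hm
  exact (mul_exp_neg_log_div_mul (Nat.cast_pos.2 hm) z u).symm

lemma tendsto_mul_maxExpCDF (f : ℝ → ℝ) (hz : 0 < z) (hu : 0 ≤ u) (hne : u ≠ z) :
    Tendsto (fun m => f u * maxExpCDF z m u) atTop (𝓝 ((Ioi z).indicator f u)) := by
  rcases hne.lt_or_gt with h | h
  · rw [indicator_of_notMem (notMem_Ioi.2 h.le)]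
    simpa using (tendsto_maxExpCDF_of_lt hz hu h).const_mul (f u)
  · rw [indicator_of_mem (mem_Ioi.2 h)]
    simpa using (tendsto_maxExpCDF_of_gt hz h).const_mul (f u)

lemma eventually_maxExpCDF_le_pow (hz : 0 < z) (k : ℕ) :
    ∀ᶠ m : ℕ in atTop, ∀ u ∈ Ioc 0 (z / 2), maxExpCDF z m u ≤ u ^ k := by
  have hc : Tendsto (fun m : ℕ => exp k / z ^ k * (log m ^ k * exp (-√m))) atTop (𝓝 0) := by
    simpa using ((tendsto_log_pow_mul_exp_neg_sqrt k).comp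
      tendsto_natCast_atTop_atTop).const_mul (exp k / z ^ k)
  filter_upwards [hc.eventually (ge_mem_nhds one_pos), eventually_ge_atTop k,
    eventually_gt_atTop 0] with m hc hkm hm u hu
  have hm' : (0 : ℝ) < m := Nat.cast_pos.2 hm
  set x := log m / z * u with hx_def
  have hx : 0 ≤ x := mul_nonneg (div_nonneg (log_natCast_nonneg m) hz.le) hu.1.le
  have hsqrt : √m ≤ m * exp (-x) := by
    have hx_le : x ≤ log m / 2 * 1 := by
      calc x ≤ log m / z * (z / 2) :=
            mul_le_mul_of_nonneg_left hu.2 (div_nonneg (log_natCast_nonneg m) hz.le)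
        _ = log m / 2 * 1 := by field_simp
    calc √m = m * exp (-(log m / 2) * 1) := by
          rw [mul_exp_neg_log_div_mul hm', sqrt_eq_rpow]; norm_num
      _ ≤ m * exp (-x) := mul_le_mul_of_nonneg_left (exp_le_exp.2 (by linarith)) hm'.le
  calc maxExpCDF z m u = (1 - exp (-x)) ^ m := by rw [maxExpCDF, neg_mul]
    _ ≤ x ^ k * exp k * exp (-(m * exp (-x))) := one_sub_exp_neg_pow_le hx hkm
    _ ≤ x ^ k * exp k * exp (-√m) := by gcongr
    _ = u ^ k * (exp k / z ^ k * (log m ^ k * exp (-√m))) := by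
        rw [hx_def, mul_pow, div_pow]; field_simp
    _ ≤ u ^ k := mul_le_of_le_one_right (pow_nonneg hu.1.le k) hc

lemma eventually_maxExpCDF_le (hz : 0 < z) (k : ℕ) :
    ∀ᶠ m : ℕ in atTop, ∀ u, 0 < u → maxExpCDF z m u ≤ (1 + (2 / z) ^ k) * u ^ k := by
  filter_upwards [eventually_maxExpCDF_le_pow hz k] with m hm u hu
  rcases le_or_gt u (z / 2) with h | h
  · exact (hm u ⟨hu, h⟩).trans
      (le_mul_of_one_le_left (by positivity) (le_add_of_nonneg_right (by positivity)))
  · calc maxExpCDF z m u ≤ 1 := (maxExpCDF_mem_Icc hz m hu.le).2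
      _ ≤ (2 / z * u) ^ k :=
          one_le_pow₀ (by rw [div_mul_eq_mul_div, le_div_iff₀ hz]; linarith)
      _ ≤ (1 + (2 / z) ^ k) * u ^ k := by rw [mul_pow]; gcongr; linarith

end maxExpCDF

theorem limit_is_incomplete_gamma (z : ℝ) (hz : 0 < z) (α : ℝ) :
    Tendsto (fun m : ℕ =>
        ∫ u in Set.Ioi (0 : ℝ),
          u ^ (α - 1) * Real.exp (-u) * (1 - Real.exp (-(Real.log m / z) * u)) ^ m)
      atTop
      (nhds (∫ u in Set.Ioi z, u ^ (α - 1) * Real.exp (-u))) := by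
  obtain ⟨k, hk⟩ := exists_nat_gt (-α)
  change Tendsto (fun m : ℕ => ∫ u in Ioi 0, u ^ (α - 1) * exp (-u) * maxExpCDF z m u) atTop _
  rw [show ∫ u in Ioi z, u ^ (α - 1) * exp (-u)
      = ∫ u in Ioi 0, (Ioi z).indicator (fun u => u ^ (α - 1) * exp (-u)) u by
    rw [setIntegral_indicator measurableSet_Ioi, Ioi_inter_Ioi, max_eq_right hz.le]]
  refine tendsto_integral_filter_of_dominated_convergence
    (fun u => (1 + (2 / z) ^ k) * (u ^ (α + k - 1) * exp (-u)))
    (Eventually.of_forall fun m => by unfold maxExpCDF; fun_prop) ?_ ?_ ?_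
  · filter_upwards [eventually_maxExpCDF_le hz k] with m hm
    filter_upwards [ae_restrict_mem measurableSet_Ioi] with u (hu : 0 < u)
    have hF := (maxExpCDF_mem_Icc hz m hu.le).1
    rw [norm_of_nonneg (by positivity)]
    calc _ ≤ u ^ (α - 1) * exp (-u) * ((1 + (2 / z) ^ k) * u ^ k) :=
          mul_le_mul_of_nonneg_left (hm u hu) (by positivity)
      _ = _ := by rw [add_sub_right_comm, rpow_add hu, rpow_natCast]; ring
  · simpa only [mul_comm (exp _)] using
      ((GammaIntegral_convergent (s := α + k) (by linarith)).const_mul (1 + (2 / z) ^ k))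
  · filter_upwards [ae_restrict_mem measurableSet_Ioi, ae_restrict_of_ae (volume.ae_ne z)]
      with u (hu : 0 < u) hne
    exact tendsto_mul_maxExpCDF _ hz hu.le hne
end
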